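/- Lipschitz constant of homogeneous dot-product kernel mappings (general case). Let P be a real inner product space and let κ(t) = Σ_{j≥0} b_j t^j with b_j ≥ 0 for all j, Σ_j b_j < ∞ and Σ_j j b_j < ∞, normalized so that κ(1) = 1 (but with κ'(1) arbitrary). Define the homogeneous dot-product kernel K(z, z') = ‖z‖ ‖z'‖ κ(⟨z, z'⟩ / (‖z‖ ‖z'‖)) for z, z' ≠ 0 and K(z, z') = 0 if z = 0 or z' = 0. Then for all z, z' ∈ P: K(z, z) + K(z', z') − 2 K(z, z') ≤ ρ² ‖z − z'‖², where ρ = max(1, √κ'(1)) and κ'(1) = Σ_j j b_j; equivalently, any kernel feature map of K is ρ-Lipschitz. -/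

import Mathlib

open scoped RealInnerProductSpace Classical

/-- The homogeneous dot-product kernel `K(z,z') = ‖z‖‖z'‖ κ(⟨z,z'⟩/(‖z‖‖z'‖))`
for `z, z' ≠ 0`, and `0` if `z = 0` or `z' = 0`, where `κ(t) = ∑ b_j t^j`. -/
noncomputable def hdpKernel {P : Type*} [NormedAddCommGroup P] [InnerProductSpace ℝ P]
    (b : ℕ → ℝ) (z z' : P) : ℝ :=
  if z = 0 ∨ z' = 0 then 0
  else ‖z‖ * ‖z'‖ * ∑' j : ℕ, b j * (⟪z, z'⟫ / (‖z‖ * ‖z'‖)) ^ j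

/-!
Write `a = ‖z‖`, `c = ‖z'‖` and `t` for the cosine of the angle between `z` and `z'`.
Since `κ(1) = 1` the diagonal of the kernel is `K(z, z) = ‖z‖²`, so the left-hand side equals
`(a - c)² + 2ac (1 - κ(t))`, while `‖z - z'‖² = (a - c)² + 2ac (1 - t)`. Bernoulli's inequality
`1 - t^j ≤ j (1 - t)` on `[-1, 1]` gives the mean value bound `1 - κ(t) ≤ κ'(1) (1 - t)`, and both
`1` and `κ'(1)` are at most `ρ²`.
-/

section PowerSeries

variable {b : ℕ → ℝ} {t : ℝ}

lemma summable_mul_pow_of_abs_le_one (hb : ∀ j, 0 ≤ b j) (hsum : Summable b) (ht : |t| ≤ 1) :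
    Summable fun j => b j * t ^ j :=
  hsum.of_norm_bounded fun j => by
    rw [Real.norm_eq_abs, abs_mul, abs_of_nonneg (hb j), abs_pow]
    exact mul_le_of_le_one_right (hb j) (pow_le_one₀ (abs_nonneg t) ht)

lemma tsum_sub_tsum_mul_pow_le (hb : ∀ j, 0 ≤ b j) (hsum : Summable b)
    (hsum' : Summable fun j : ℕ => (j : ℝ) * b j) (ht : |t| ≤ 1) :
    ∑' j, b j - ∑' j, b j * t ^ j ≤ (∑' j : ℕ, (j : ℝ) * b j) * (1 - t) := by
  have hS := summable_mul_pow_of_abs_le_one hb hsum ht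
  rw [← hsum.tsum_sub hS, ← tsum_mul_right]
  refine (hsum.sub hS).tsum_le_tsum (fun j => ?_) (hsum'.mul_right _)
  have bernoulli := one_add_mul_sub_le_pow (neg_le_of_abs_le ht) j
  nlinarith [hb j]

end PowerSeries

section Kernel

variable {P : Type*} [NormedAddCommGroup P] [InnerProductSpace ℝ P] {b : ℕ → ℝ}

@[simp]
lemma hdpKernel_zero_left (z : P) : hdpKernel b 0 z = 0 := by
  simp [hdpKernel]

@[simp]
lemma hdpKernel_zero_right (z : P) : hdpKernel b z 0 = 0 := by
  simp [hdpKernel]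

lemma hdpKernel_of_ne_zero {z z' : P} (hz : z ≠ 0) (hz' : z' ≠ 0) :
    hdpKernel b z z' = ‖z‖ * ‖z'‖ * ∑' j : ℕ, b j * (⟪z, z'⟫ / (‖z‖ * ‖z'‖)) ^ j := by
  rw [hdpKernel, if_neg (not_or.2 ⟨hz, hz'⟩)]

lemma hdpKernel_self (hone : ∑' j, b j = 1) (z : P) : hdpKernel b z z = ‖z‖ ^ 2 := by
  rcases eq_or_ne z 0 with rfl | hz
  · simp
  have hzz : ‖z‖ * ‖z‖ ≠ 0 := by positivity
  rw [hdpKernel_of_ne_zero hz hz, real_inner_self_eq_norm_mul_norm, div_self hzz]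
  simp [hone, sq]

end Kernel

/-- Lipschitz constant of homogeneous dot-product kernel mappings (general case):
if `κ(1) = 1`, then `K(z,z) + K(z',z') − 2K(z,z') ≤ ρ² ‖z − z'‖²` with
`ρ = max(1, √κ'(1))`, `κ'(1) = ∑ j b_j`. -/
theorem stmt_6 {P : Type*} [NormedAddCommGroup P] [InnerProductSpace ℝ P]
    (b : ℕ → ℝ) (hb : ∀ j, 0 ≤ b j)
    (hsum : Summable b) (hsum' : Summable fun j : ℕ => (j : ℝ) * b j)
    (hone : (∑' j, b j) = 1) :
    ∀ z z' : P,
      hdpKernel b z z + hdpKernel b z' z' - 2 * hdpKernel b z z' ≤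
        (max 1 (Real.sqrt (∑' j : ℕ, (j : ℝ) * b j))) ^ 2 * ‖z - z'‖ ^ 2 := by
  intro z z'
  set L := ∑' j : ℕ, (j : ℝ) * b j
  set ρ := max 1 (Real.sqrt L)
  have one_le : 1 ≤ ρ ^ 2 := one_le_pow₀ (le_max_left _ _)
  have L_le : L ≤ ρ ^ 2 := by
    have hL : 0 ≤ L := tsum_nonneg fun j => mul_nonneg j.cast_nonneg (hb j)
    calc L = Real.sqrt L ^ 2 := (Real.sq_sqrt hL).symm
      _ ≤ ρ ^ 2 := by gcongr; exact le_max_right _ _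
  rw [hdpKernel_self hone, hdpKernel_self hone, norm_sub_sq_real]
  rcases eq_or_ne z 0 with rfl | hz
  · simpa using le_mul_of_one_le_left (sq_nonneg ‖z'‖) one_le
  rcases eq_or_ne z' 0 with rfl | hz'
  · simpa using le_mul_of_one_le_left (sq_nonneg ‖z‖) one_le
  rw [hdpKernel_of_ne_zero hz hz']
  set a := ‖z‖ * ‖z'‖
  set t := ⟪z, z'⟫ / a
  have ht : |t| ≤ 1 := abs_real_inner_div_norm_mul_norm_le_one z z'
  have hκ := tsum_sub_tsum_mul_pow_le hb hsum hsum' ht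
  rw [hone] at hκ
  have ha : 0 ≤ a := by positivity
  have hinner : ⟪z, z'⟫ = a * t := (mul_div_cancel₀ _ (by positivity)).symm
  calc ‖z‖ ^ 2 + ‖z'‖ ^ 2 - 2 * (a * ∑' j, b j * t ^ j)
      = (‖z‖ - ‖z'‖) ^ 2 + 2 * a * (1 - ∑' j, b j * t ^ j) := by ring
    _ ≤ ρ ^ 2 * (‖z‖ - ‖z'‖) ^ 2 + 2 * a * (ρ ^ 2 * (1 - t)) := by
      gcongr
      · exact le_mul_of_one_le_left (sq_nonneg _) one_le
      · exact hκ.trans (by gcongr; linarith [le_of_abs_le ht])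
    _ = ρ ^ 2 * (‖z‖ ^ 2 - 2 * ⟪z, z'⟫ + ‖z'‖ ^ 2) := by rw [hinner]; ring
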